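/- arXiv:2405.09835 — 3 statements merged into one kernel-verified Lean document; each statement's English description precedes it below -/
import Mathlib

section
/- Let u : ℝ × ℝ → ℝ be defined by u(x,t) = sin(2·arctan(exp(−t)·tan(x/2)))/sin(x). Then for every t ∈ ℝ and every x ∈ (0,π) ∪ (π,2π), u is differentiable at (x,t) and satisfies the variable-coefficient transport equation ∂_t u(x,t) + ∂_x( sin(x)·u(x,t) ) = 0; moreover u(x,0) = 1 for all x ∈ (0,π) ∪ (π,2π). -/
/-!
Along the characteristics `ẋ = sin x` one has `tan (x / 2) = eᵗ · tan (x₀ / 2)`, so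
`exp (-t) * tan (x / 2)` is a first integral, killed by `∂ₜ + sin x ∂ₓ`, and so is
`w = sin (2 * arctan (exp (-t) * tan (x / 2)))`. Since `u = w / sin x`, this gives
`∂ₜ u + ∂ₓ (sin x * u) = (∂ₜ w + sin x ∂ₓ w) / sin x = 0`. At `t = 0`, the half-angle formula
`sin x = 2 tan (x / 2) / (1 + tan (x / 2) ^ 2) = sin (2 * arctan (tan (x / 2)))` gives `u = 1`.
-/

open Real Set

lemma sin_ne_zero_of_mem_Ioo_union {x : ℝ} (hx : x ∈ Ioo 0 π ∪ Ioo π (2 * π)) : sin x ≠ 0 := by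
  rcases hx with ⟨h0, h1⟩ | ⟨h0, h1⟩
  · exact (sin_pos_of_pos_of_lt_pi h0 h1).ne'
  · rw [← sin_sub_two_pi]
    exact (sin_neg_of_neg_of_neg_pi_lt (by linarith) (by linarith)).ne

lemma cos_half_ne_zero_of_sin_ne_zero {x : ℝ} (hx : sin x ≠ 0) : cos (x / 2) ≠ 0 := by
  rw [← mul_div_cancel₀ x two_ne_zero, sin_two_mul] at hx
  exact right_ne_zero_of_mul hx

lemma sin_two_mul_arctan (w : ℝ) : sin (2 * arctan w) = 2 * w / (1 + w ^ 2) := by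
  rw [sin_eq_two_mul_tan_half_div_one_add_tan_half_sq, mul_div_cancel_left₀ _ two_ne_zero,
    tan_arctan]

lemma sin_mul_one_add_tan_half_sq_div_two (x : ℝ) :
    sin x * ((1 + tan (x / 2) ^ 2) / 2) = tan (x / 2) := by
  rw [sin_eq_two_mul_tan_half_div_one_add_tan_half_sq]
  field_simp

lemma hasDerivAt_tan_half {x : ℝ} (h : cos (x / 2) ≠ 0) :
    HasDerivAt (fun y => tan (y / 2)) ((1 + tan (x / 2) ^ 2) / 2) x := by
  refine ((hasDerivAt_tan h).comp x ((hasDerivAt_id' x).div_const 2)).congr_deriv ?_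
  rw [one_div, ← inv_one_add_tan_sq h, inv_inv]
  ring

lemma transport_comp_exp_neg_mul_tan_half {G : ℝ → ℝ} {G' x t : ℝ} (hx : cos (x / 2) ≠ 0)
    (hG : HasDerivAt G G' (exp (-t) * tan (x / 2))) :
    deriv (fun s => G (exp (-s) * tan (x / 2))) t
      + sin x * deriv (fun y => G (exp (-t) * tan (y / 2))) x = 0 := by
  have htime : HasDerivAt (fun s => G (exp (-s) * tan (x / 2)))
      (G' * (-exp (-t) * tan (x / 2))) t :=
    hG.comp t (((hasDerivAt_neg' t).exp.congr_deriv (mul_neg_one _)).mul_const _)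
  have hspace : HasDerivAt (fun y => G (exp (-t) * tan (y / 2)))
      (G' * (exp (-t) * ((1 + tan (x / 2) ^ 2) / 2))) x :=
    hG.comp x ((hasDerivAt_tan_half hx).const_mul _)
  rw [htime.deriv, hspace.deriv]
  linear_combination G' * exp (-t) * sin_mul_one_add_tan_half_sq_div_two x

/-- u(x,t) = sin(2·arctan(exp(−t)·tan(x/2)))/sin(x) is, for every t ∈ ℝ and
x ∈ (0,π) ∪ (π,2π), differentiable at (x,t) and satisfies the variable-coefficient
transport equation ∂_t u + ∂_x (sin(x)·u) = 0; moreover u(x,0) = 1 there. -/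
theorem stmt0 (u : ℝ × ℝ → ℝ)
    (hu : ∀ p : ℝ × ℝ,
      u p = Real.sin (2 * Real.arctan (Real.exp (-p.2) * Real.tan (p.1 / 2))) / Real.sin p.1) :
    ∀ t : ℝ, ∀ x ∈ Set.Ioo (0 : ℝ) π ∪ Set.Ioo π (2 * π),
      DifferentiableAt ℝ u (x, t) ∧
      deriv (fun s : ℝ => u (x, s)) t + deriv (fun y : ℝ => Real.sin y * u (y, t)) x = 0 ∧
      u (x, 0) = 1 := by
  intro t x hx
  have hsin := sin_ne_zero_of_mem_Ioo_union hx
  have hcos := cos_half_ne_zero_of_sin_ne_zero hsin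
  have harctan := differentiable_arctan
  set G : ℝ → ℝ := fun w => sin (2 * arctan w)
  have hG : Differentiable ℝ G := by fun_prop
  refine ⟨?_, ?_, ?_⟩
  · have htan : DifferentiableAt ℝ (fun p : ℝ × ℝ => tan (p.1 / 2)) (x, t) :=
      DifferentiableAt.comp (g := fun y => tan (y / 2)) (x, t)
        (hasDerivAt_tan_half hcos).differentiableAt differentiableAt_fst
    rw [funext hu]
    fun_prop (disch := exact hsin)
  · have htime : deriv (fun s => u (x, s)) t
        = deriv (fun s => G (exp (-s) * tan (x / 2))) t / sin x := by
      simp only [hu]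
      exact deriv_div_const _
    have hspace : deriv (fun y => sin y * u (y, t)) x
        = deriv (fun y => G (exp (-t) * tan (y / 2))) x := by
      refine Filter.EventuallyEq.deriv_eq ?_
      filter_upwards [continuous_sin.continuousAt.eventually_ne hsin] with y hy
      rw [hu, mul_div_cancel₀ _ hy]
    rw [htime, hspace, div_add' _ _ _ hsin, div_eq_zero_iff]
    left
    linear_combination transport_comp_exp_neg_mul_tan_half hcos (hG _).hasDerivAt
  · rw [hu, neg_zero, exp_zero, one_mul, sin_two_mul_arctan,
      ← sin_eq_two_mul_tan_half_div_one_add_tan_half_sq, div_self hsin]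
end

section
/- Let u₀ : ℝ → ℝ be continuously differentiable with u₀ and u₀′ bounded, set m = sup_{x∈ℝ} max(0, −u₀′(x)), and let T > 0 satisfy T·m < 1. For each t ∈ [0,T) the map χ_t(x) = x + t·u₀(x) is a strictly increasing bijection from ℝ onto ℝ, and the function u(y,t) := u₀(χ_t⁻¹(y)) is a classical solution of Burgers' equation: u is differentiable on ℝ × (0,T) with ∂_t u + u·∂_x u = 0 there, and u(y,0) = u₀(y) for all y ∈ ℝ. -/
open Set Filter Topology ContinuousLinearMap

/-!
The bound `T m < 1` makes `1 + t u₀' > 0` for `0 ≤ t < T`, so `χ_t x = x + t u₀ x` is strictly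
increasing, and since `u₀` is bounded it is also onto. The space-time map `(x, t) ↦ (χ_t x, t)`
then has the invertible Jacobian `(h, k) ↦ ((1 + t u₀' x) h + u₀ x k, k)`, so by the inverse
function theorem `u = u₀ ∘ fst ∘ (local inverse)` is differentiable, with gradient
`u₀' x / (1 + t u₀' x) • (1, -u₀ x)` at `(χ_t x, t)`; this gradient is annihilated by
`∂_t + u ∂_x` because `u = u₀ x` there.
-/

lemma one_add_mul_pos_of_mul_iSup_lt {f : ℝ → ℝ} (hf : BddBelow (range f)) {t T : ℝ}
    (ht : t ∈ Ico 0 T) (hT : T * ⨆ x, max 0 (-f x) < 1) (x : ℝ) : 0 < 1 + t * f x := by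
  set m := ⨆ x, max 0 (-f x)
  obtain ⟨c, hc⟩ := hf
  have hbdd : BddAbove (range fun x => max 0 (-f x)) :=
    ⟨max 0 (-c), by rintro _ ⟨z, rfl⟩; exact max_le_max le_rfl (neg_le_neg (hc ⟨z, rfl⟩))⟩
  have hm : 0 ≤ m := Real.iSup_nonneg fun _ => le_max_left _ _
  have hfx : -f x ≤ m := (le_max_right _ _).trans (le_ciSup hbdd x)
  calc 0 < 1 - T * m := by linarith
    _ ≤ 1 - t * m := by nlinarith [ht.2]
    _ ≤ 1 + t * f x := by nlinarith [ht.1]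

section Characteristics

variable {g : ℝ → ℝ}

lemma strictMono_add_mul_of_deriv_pos (hg : Differentiable ℝ g) {t : ℝ}
    (h : ∀ x, 0 < 1 + t * deriv g x) : StrictMono fun x => x + t * g x :=
  strictMono_of_deriv_pos fun x => by
    have hχ : HasDerivAt (fun x => x + t * g x) (1 + t * deriv g x) x :=
      (hasDerivAt_id' x).add ((hg x).hasDerivAt.const_mul t)
    exact hχ.deriv ▸ h x

lemma surjective_add_mul_of_abs_le (hg : Continuous g) {C : ℝ} (hC : ∀ x, |g x| ≤ C) (t : ℝ) :
    Function.Surjective fun x => x + t * g x := by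
  have hbound : ∀ x, |t * g x| ≤ |t| * C := fun x => by
    rw [abs_mul]; exact mul_le_mul_of_nonneg_left (hC x) (abs_nonneg t)
  refine (continuous_id.add (continuous_const.mul hg)).surjective ?_ ?_
  · exact tendsto_atTop_add_right_of_le _ (-(|t| * C)) tendsto_id
      fun x => neg_le_of_abs_le (hbound x)
  · exact tendsto_atBot_add_right_of_ge _ (|t| * C) tendsto_id fun x => le_of_abs_le (hbound x)

def charMap (g : ℝ → ℝ) (p : ℝ × ℝ) : ℝ × ℝ := (p.1 + p.2 * g p.1, p.2)

noncomputable def shearEquiv (a b : ℝ) (ha : a ≠ 0) : (ℝ × ℝ) ≃L[ℝ] ℝ × ℝ :=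
  ContinuousLinearEquiv.equivOfInverse
    ((a • fst ℝ ℝ ℝ + b • snd ℝ ℝ ℝ).prod (snd ℝ ℝ ℝ))
    ((a⁻¹ • fst ℝ ℝ ℝ - (a⁻¹ * b) • snd ℝ ℝ ℝ).prod (snd ℝ ℝ ℝ))
    (fun p => by ext <;> simp [field])
    (fun p => by ext <;> simp [field])

@[simp]
lemma shearEquiv_apply (a b : ℝ) (ha : a ≠ 0) (p : ℝ × ℝ) :
    shearEquiv a b ha p = (a * p.1 + b * p.2, p.2) := rfl

@[simp]
lemma shearEquiv_symm_apply (a b : ℝ) (ha : a ≠ 0) (p : ℝ × ℝ) :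
    (shearEquiv a b ha).symm p = (a⁻¹ * p.1 - a⁻¹ * b * p.2, p.2) := rfl

variable {g' x t : ℝ}

lemma hasStrictFDerivAt_charMap (hg : HasStrictDerivAt g g' x) (hd : 1 + t * g' ≠ 0) :
    HasStrictFDerivAt (charMap g) (shearEquiv (1 + t * g') (g x) hd : ℝ × ℝ →L[ℝ] ℝ × ℝ)
      (x, t) := by
  have hgfst : HasStrictFDerivAt (fun p : ℝ × ℝ => g p.1) _ (x, t) :=
    hg.hasStrictFDerivAt.comp (x, t) hasStrictFDerivAt_fst
  have hmul := hasStrictFDerivAt_snd.mul hgfst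
  have hΦ : HasStrictFDerivAt (charMap g) _ (x, t) :=
    (hasStrictFDerivAt_fst.add hmul).prodMk hasStrictFDerivAt_snd
  exact hΦ.congr_fderiv (by ext <;> simp)

lemma hasFDerivAt_of_eventually_comp_charMap_eq (hg : HasStrictDerivAt g g' x)
    (hd : 1 + t * g' ≠ 0) {U : ℝ × ℝ → ℝ} (hU : ∀ᶠ q in 𝓝 (x, t), U (charMap g q) = g q.1) :
    HasFDerivAt U ((g' / (1 + t * g')) • (fst ℝ ℝ ℝ - g x • snd ℝ ℝ ℝ)) (charMap g (x, t)) := by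
  have hΦ := hasStrictFDerivAt_charMap hg hd
  have hψ : ∀ᶠ p in 𝓝 (charMap g (x, t)), U p = g (hΦ.localInverse _ _ _ p).1 := by
    filter_upwards [hΦ.eventually_right_inverse, hΦ.localInverse_tendsto.eventually hU]
      with p hp hUp
    rw [← hUp, hp]
  have hg' : HasFDerivAt g (smulRight (1 : ℝ →L[ℝ] ℝ) g')
      (hΦ.localInverse _ _ _ (charMap g (x, t))).1 := by
    rw [hΦ.localInverse_apply_image]
    exact hg.hasDerivAt.hasFDerivAt
  have hψ_fst := hasFDerivAt_fst.comp _ hΦ.to_localInverse.hasFDerivAt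
  refine ((hg'.comp (charMap g (x, t)) hψ_fst).congr_of_eventuallyEq hψ).congr_fderiv ?_
  ext <;> simp [field]

end Characteristics

lemma HasFDerivAt.deriv_partial {U : ℝ × ℝ → ℝ} {L : ℝ × ℝ →L[ℝ] ℝ} {y t : ℝ}
    (hU : HasFDerivAt U L (y, t)) :
    deriv (fun s => U (y, s)) t = L (0, 1) ∧ deriv (fun z => U (z, t)) y = L (1, 0) :=
  ⟨(hU.comp_hasDerivAt t ((hasDerivAt_const t y).prodMk (hasDerivAt_id t))).deriv,
    (hU.comp_hasDerivAt y ((hasDerivAt_id y).prodMk (hasDerivAt_const y t))).deriv⟩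

/-- For u₀ ∈ C¹ with u₀ and u₀′ bounded, m = sup_x max(0, −u₀′(x)), and
T > 0 with T·m < 1: for each t ∈ [0,T) the map χ_t(x) = x + t·u₀(x) is a strictly
increasing bijection of ℝ, and u(y,t) = u₀(χ_t⁻¹(y)) is a classical solution of
Burgers' equation: differentiable on ℝ × (0,T) with ∂_t u + u·∂_x u = 0 there,
and u(y,0) = u₀(y). -/
theorem stmt5 (u₀ : ℝ → ℝ) (hC1 : ContDiff ℝ 1 u₀)
    (hbdd : ∃ C : ℝ, ∀ x : ℝ, |u₀ x| ≤ C)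
    (hbdd' : ∃ C : ℝ, ∀ x : ℝ, |deriv u₀ x| ≤ C)
    (m : ℝ) (hm : m = ⨆ x : ℝ, max 0 (-(deriv u₀ x)))
    (T : ℝ) (hT : 0 < T) (hTm : T * m < 1)
    (χ : ℝ → ℝ → ℝ) (hχ : ∀ t x : ℝ, χ t x = x + t * u₀ x)
    (u : ℝ → ℝ → ℝ) (hu : ∀ y t : ℝ, u y t = u₀ (Function.invFun (χ t) y)) :
    (∀ t ∈ Set.Ico (0 : ℝ) T, StrictMono (χ t) ∧ Function.Bijective (χ t)) ∧
    (∀ y : ℝ, ∀ t ∈ Set.Ioo (0 : ℝ) T,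
      DifferentiableAt ℝ (fun p : ℝ × ℝ => u p.1 p.2) (y, t) ∧
      deriv (fun s : ℝ => u y s) t + u y t * deriv (fun z : ℝ => u z t) y = 0) ∧
    (∀ y : ℝ, u y 0 = u₀ y) := by
  obtain ⟨C, hC⟩ := hbdd
  obtain ⟨C', hC'⟩ := hbdd'
  have hχ' : ∀ t, χ t = fun x => x + t * u₀ x := fun t => funext (hχ t)
  have hpos : ∀ t ∈ Ico 0 T, ∀ x, 0 < 1 + t * deriv u₀ x := fun t ht =>
    one_add_mul_pos_of_mul_iSup_lt ⟨-C', by rintro _ ⟨x, rfl⟩; exact neg_le_of_abs_le (hC' x)⟩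
      ht (hm ▸ hTm)
  have hbij : ∀ t ∈ Ico 0 T, StrictMono (χ t) ∧ Function.Bijective (χ t) := fun t ht => by
    have hmono :=
      hχ' t ▸ strictMono_add_mul_of_deriv_pos (hC1.differentiable one_ne_zero) (hpos t ht)
    exact ⟨hmono, hmono.injective, hχ' t ▸ surjective_add_mul_of_abs_le hC1.continuous hC t⟩
  have hu_char : ∀ t ∈ Ico 0 T, ∀ x, u (χ t x) t = u₀ x := fun t ht x => by
    rw [hu, Function.leftInverse_invFun (hbij t ht).2.1]
  refine ⟨hbij, fun y t ht => ?_, fun y => by simpa [hχ] using hu_char 0 ⟨le_rfl, hT⟩ y⟩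
  obtain ⟨x, rfl⟩ := (hbij t (Ioo_subset_Ico_self ht)).2.2 y
  have hU := hasFDerivAt_of_eventually_comp_charMap_eq (U := fun p => u p.1 p.2)
    (hC1.contDiffAt.hasStrictDerivAt one_ne_zero) (hpos t (Ioo_subset_Ico_self ht) x).ne' <|
    (isOpen_Ioo.preimage continuous_snd).eventually_mem ht |>.mono fun q hq => by
      simpa [charMap, hχ] using hu_char q.2 (Ioo_subset_Ico_self hq) q.1
  rw [charMap, ← hχ] at hU
  obtain ⟨hdt, hdx⟩ := hU.deriv_partial
  refine ⟨hU.differentiableAt, ?_⟩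
  rw [hdt, hdx, hu_char t (Ioo_subset_Ico_self ht)]
  simp only [smul_apply, sub_apply, coe_fst', coe_snd', smul_eq_mul]
  ring
end

section
/- Let T > 0 and let u : ℝ × [0,T) → ℝ be continuously differentiable and satisfy ∂_t u + u·∂_x u = 0 on ℝ × [0,T). Fix a ≤ b and set ν_l = u(a,0) and ν_r = u(b,0), and assume a + ν_l·t ≤ b + ν_r·t for all t ∈ [0,T) (the two characteristics do not cross). Then for every t ∈ [0,T), ∫_{a+ν_l t}^{b+ν_r t} u(x,t) dx = ∫_a^b u(x,0) dx + t·( ν_r²/2 − ν_l²/2 ). In particular, the Eulerian–Lagrangian update of the cell mass along exact characteristics of Burgers' equation is exact in time: the modified flux f(u) − ν·u is constant (equal to −ν²/2) along each exact characteristic, so the time evolution of the mass between two characteristics is exactly linear and the Runge–Kutta time discretization introduces no temporal error. -/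
/-!
Along a line `x₀ + v t` a solution satisfies `d/dt u = (v - u) ∂ₓu`; on the characteristic
`v = u(x₀, 0)` Grönwall's inequality forces `u ≡ v`. Fill the cell between the two lateral lines
by the fan of lines `θ ∈ [0, 1]` with interpolated speeds `ν(θ)`. The mass becomes
`∫₀¹ G(t, θ) dθ` with fixed limits, and the equation gives `∂ₜG = -∂_θ (f(u) - ν(θ) u)`.
Differentiating under the integral, the mass has derivative `-(F_r - F_l)`, where the modified
flux `F = f(u) - ν u` equals `-ν²/2` on each lateral line because `u = ν` there.
-/

open Set MeasureTheory intervalIntegral Function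

section IntervalIntegral

variable {E : Type*} [NormedAddCommGroup E] [NormedSpace ℝ E]

theorem continuousOn_intervalIntegral_of_continuousOn_uncurry {F : ℝ → ℝ → E} {K : Set ℝ}
    (hF : ContinuousOn (uncurry F) (K ×ˢ univ)) (a b : ℝ) :
    ContinuousOn (fun s => ∫ θ in a..b, F s θ) K := by
  rw [continuousOn_iff_continuous_domRestrict]
  have : Continuous (uncurry F ∘ fun p : K × ℝ => ((p.1 : ℝ), p.2)) :=
    hF.comp_continuous (by fun_prop) fun p => ⟨p.1.2, mem_univ _⟩
  exact continuous_parametric_intervalIntegral_of_continuous' (f := fun (s : K) θ => F s θ) this a b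

theorem hasDerivAt_intervalIntegral_of_continuousOn_deriv {F F' : ℝ → ℝ → E} {I : Set ℝ}
    {s₀ : ℝ} (hI : IsOpen I) (hs₀ : s₀ ∈ I)
    (hF : ContinuousOn (uncurry F) (I ×ˢ univ)) (hF' : ContinuousOn (uncurry F') (I ×ˢ univ))
    (hderiv : ∀ s ∈ I, ∀ θ, HasDerivAt (F · θ) (F' s θ) s) (a b : ℝ) :
    HasDerivAt (fun s => ∫ θ in a..b, F s θ) (∫ θ in a..b, F' s₀ θ) s₀ := by
  obtain ⟨ε, hε, hball⟩ := Metric.nhds_basis_closedBall.mem_iff.mp (hI.mem_nhds hs₀)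
  obtain ⟨M, hM⟩ := ((isCompact_closedBall s₀ ε).prod isCompact_uIcc).exists_bound_of_continuousOn
    (hF'.mono (prod_mono hball (subset_univ (uIcc a b))))
  have hslice : ∀ s ∈ I, Continuous (F s) := fun s hs =>
    hF.comp_continuous (Continuous.prodMk_right s) fun θ => ⟨hs, mem_univ θ⟩
  have hslice' : Continuous (F' s₀) :=
    hF'.comp_continuous (Continuous.prodMk_right s₀) fun θ => ⟨hs₀, mem_univ θ⟩
  refine (hasDerivAt_integral_of_dominated_loc_of_deriv_le (bound := fun _ => M)
    (Metric.ball_mem_nhds s₀ hε) ?_ ((hslice s₀ hs₀).intervalIntegrable a b)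
    hslice'.aestronglyMeasurable.restrict ?_ intervalIntegrable_const ?_).2
  · filter_upwards [hI.mem_nhds hs₀] with s hs using (hslice s hs).aestronglyMeasurable.restrict
  · exact ae_of_all _ fun θ hθ s hs =>
      hM (s, θ) ⟨Metric.ball_subset_closedBall hs, uIoc_subset_uIcc hθ⟩
  · exact ae_of_all _ fun θ _ s hs => hderiv s (hball (Metric.ball_subset_closedBall hs)) θ

theorem intervalIntegral_eq_integral_zero_one (f : ℝ → E) (α β : ℝ) :
    ∫ x in α..β, f x = ∫ θ in (0 : ℝ)..1, (β - α) • f (α + θ * (β - α)) := by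
  rw [intervalIntegral.integral_smul]
  have := smul_integral_comp_mul_add (fun x => f x) (β - α) α (a := 0) (b := 1)
  simp only [mul_zero, zero_add, mul_one, sub_add_cancel] at this
  rw [← this]
  simp only [mul_comm, add_comm]

end IntervalIntegral

section Burgers

variable {T : ℝ} {u : ℝ → ℝ → ℝ}

def IsClassicalBurgersSolution (T : ℝ) (u : ℝ → ℝ → ℝ) : Prop :=
  ContDiffOn ℝ 1 (fun p : ℝ × ℝ => u p.1 p.2) (univ ×ˢ Ico 0 T) ∧
    ∀ x, ∀ t ∈ Ico 0 T,
      derivWithin (fun s => u x s) (Ico 0 T) t + u x t * deriv (fun y => u y t) x = 0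

theorem hasDerivAt_space_slice
    (hreg : ContDiffOn ℝ 1 (fun p : ℝ × ℝ => u p.1 p.2) (univ ×ˢ Ico 0 T))
    {t : ℝ} (ht : t ∈ Ico 0 T) (x : ℝ) :
    HasDerivAt (fun y => u y t)
      (fderivWithin ℝ (fun p : ℝ × ℝ => u p.1 p.2) (univ ×ˢ Ico 0 T) (x, t) (1, 0)) x := by
  have hp : (x, t) ∈ univ ×ˢ Ico 0 T := ⟨mem_univ x, ht⟩
  have h := (hreg.differentiableOn one_ne_zero _ hp).hasFDerivWithinAt.comp_hasDerivWithinAt_of_eq x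
    ((hasDerivAt_id x).prodMk (hasDerivAt_const x t)).hasDerivWithinAt (s := univ)
    (fun y _ => ⟨mem_univ y, ht⟩) rfl
  exact hasDerivWithinAt_univ.mp h

theorem hasDerivWithinAt_time_slice
    (hreg : ContDiffOn ℝ 1 (fun p : ℝ × ℝ => u p.1 p.2) (univ ×ˢ Ico 0 T))
    {t : ℝ} (ht : t ∈ Ico 0 T) (x : ℝ) :
    HasDerivWithinAt (fun s => u x s)
      (fderivWithin ℝ (fun p : ℝ × ℝ => u p.1 p.2) (univ ×ˢ Ico 0 T) (x, t) (0, 1))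
      (Ico 0 T) t :=
  (hreg.differentiableOn one_ne_zero (x, t) ⟨mem_univ x, ht⟩).hasFDerivWithinAt
    |>.comp_hasDerivWithinAt t
    ((hasDerivAt_const t x).prodMk (hasDerivAt_id t)).hasDerivWithinAt
    fun _ hs => ⟨mem_univ x, hs⟩

theorem differentiableAt_space_slice
    (hreg : ContDiffOn ℝ 1 (fun p : ℝ × ℝ => u p.1 p.2) (univ ×ˢ Ico 0 T))
    {t : ℝ} (ht : t ∈ Ico 0 T) (x : ℝ) : DifferentiableAt ℝ (fun y => u y t) x :=
  (hasDerivAt_space_slice hreg ht x).differentiableAt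

theorem continuousOn_deriv_space_slice
    (hreg : ContDiffOn ℝ 1 (fun p : ℝ × ℝ => u p.1 p.2) (univ ×ˢ Ico 0 T)) :
    ContinuousOn (fun p : ℝ × ℝ => deriv (fun y => u y p.2) p.1) (univ ×ˢ Ico 0 T) := by
  have hD := hreg.continuousOn_fderivWithin (uniqueDiffOn_univ.prod (uniqueDiffOn_Ico 0 T)) le_rfl
  refine (hD.clm_apply (continuousOn_const (c := ((1 : ℝ), (0 : ℝ))))).congr fun p hp => ?_
  exact (hasDerivAt_space_slice hreg hp.2 p.1).deriv

theorem IsClassicalBurgersSolution.hasDerivWithinAt_along_line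
    (hu : IsClassicalBurgersSolution T u) (x₀ v : ℝ) {s : ℝ} (hs : s ∈ Ico 0 T) :
    HasDerivWithinAt (fun r => u (x₀ + v * r) r)
      ((v - u (x₀ + v * s) s) * deriv (fun y => u y s) (x₀ + v * s)) (Ico 0 T) s := by
  set D := fderivWithin ℝ (fun p : ℝ × ℝ => u p.1 p.2) (univ ×ˢ Ico 0 T) (x₀ + v * s, s)
  have hline : HasDerivAt (fun r => (x₀ + v * r, r)) (v, 1) s := by
    simpa using ((hasDerivAt_id s).const_mul v |>.const_add x₀).prodMk (hasDerivAt_id s)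
  have hp : (x₀ + v * s, s) ∈ univ ×ˢ Ico 0 T := ⟨mem_univ _, hs⟩
  have h := (hu.1.differentiableOn one_ne_zero _ hp).hasFDerivWithinAt.comp_hasDerivWithinAt_of_eq s
    hline.hasDerivWithinAt (fun r hr => ⟨mem_univ _, hr⟩) rfl
  have hx : deriv (fun y => u y s) (x₀ + v * s) = D (1, 0) :=
    (hasDerivAt_space_slice hu.1 hs _).deriv
  have ht : derivWithin (fun r => u (x₀ + v * s) r) (Ico 0 T) s = D (0, 1) :=
    (hasDerivWithinAt_time_slice hu.1 hs _).derivWithin (uniqueDiffOn_Ico 0 T s hs)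
  have hsplit : D (v, 1) = v * D (1, 0) + D (0, 1) := by
    rw [show ((v, 1) : ℝ × ℝ) = v • (1, 0) + (0, 1) by simp, map_add, map_smul, smul_eq_mul]
  have hpde := hu.2 (x₀ + v * s) s hs
  rw [hx, ht] at hpde
  refine h.congr_deriv ?_
  rw [hsplit, hx]
  linear_combination hpde

theorem IsClassicalBurgersSolution.apply_along_characteristic (hu : IsClassicalBurgersSolution T u)
    (c : ℝ) {t : ℝ} (ht : t ∈ Ico 0 T) : u (c + u c 0 * t) t = u c 0 := by
  set ν := u c 0
  have hIcc : Icc 0 t ⊆ Ico 0 T := Icc_subset_Ico_right ht.2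
  have hderiv := fun s (hs : s ∈ Ico 0 T) => hu.hasDerivWithinAt_along_line c ν hs
  obtain ⟨K, hK⟩ : ∃ K, ∀ s ∈ Icc 0 t, ‖deriv (fun y => u y s) (c + ν * s)‖ ≤ K :=
    isCompact_Icc.exists_bound_of_continuousOn <|
      (continuousOn_deriv_space_slice hu.1).comp
        (by fun_prop : Continuous fun s => (c + ν * s, s)).continuousOn
        fun s hs => ⟨mem_univ _, hIcc hs⟩
  have hzero := eq_zero_of_abs_deriv_le_mul_abs_self_of_eq_zero_right
    (f := fun r => u (c + ν * r) r - ν) (K := K)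
    ((ContinuousOn.mono (fun s hs => (hderiv s hs).continuousWithinAt) hIcc).sub
      continuousOn_const)
    (fun s hs => ((hderiv s (hIcc (Ico_subset_Icc_self hs))).sub_const ν).mono_of_mem_nhdsWithin ?_)
    (by simp [ν]) (fun s hs => ?_) t ⟨ht.1, le_rfl⟩
  · exact sub_eq_zero.mp hzero
  · exact Ico_mem_nhdsGE_of_mem ⟨hs.1, hs.2.trans ht.2⟩
  · rw [norm_mul, ← norm_neg, neg_sub, mul_comm]
    exact mul_le_mul_of_nonneg_right (hK s (Ico_subset_Icc_self hs)) (norm_nonneg _)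

end Burgers

noncomputable def modifiedFlux (ν w : ℝ) : ℝ := w ^ 2 / 2 - ν * w

section Fan

variable {T : ℝ} {u : ℝ → ℝ → ℝ} {a b νl νr : ℝ}

def fanLine (a b νl νr θ s : ℝ) : ℝ := a + θ * (b - a) + (νl + θ * (νr - νl)) * s

@[simp] theorem fanLine_zero (s : ℝ) : fanLine a b νl νr 0 s = a + νl * s := by
  simp [fanLine]

@[simp] theorem fanLine_one (s : ℝ) : fanLine a b νl νr 1 s = b + νr * s := by
  simp only [fanLine]; ring

variable (u a b νl νr) in
noncomputable def fanIntegrand (s θ : ℝ) : ℝ :=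
  (b - a + (νr - νl) * s) * u (fanLine a b νl νr θ s) s

variable (u a b νl νr) in
noncomputable def fanIntegrandTimeDeriv (s θ : ℝ) : ℝ :=
  (νr - νl) * u (fanLine a b νl νr θ s) s + (b - a + (νr - νl) * s) *
    ((νl + θ * (νr - νl) - u (fanLine a b νl νr θ s) s) *
      deriv (fun y => u y s) (fanLine a b νl νr θ s))

theorem integral_eq_integral_fanIntegrand (s : ℝ) :
    ∫ x in (a + νl * s)..(b + νr * s), u x s = ∫ θ in (0 : ℝ)..1, fanIntegrand u a b νl νr s θ := by
  rw [intervalIntegral_eq_integral_zero_one]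
  congr 1 with θ
  rw [smul_eq_mul, fanIntegrand, fanLine]
  ring_nf

theorem continuousOn_comp_fanLine {w : ℝ × ℝ → ℝ} (hw : ContinuousOn w (univ ×ˢ Ico 0 T)) :
    ContinuousOn (fun q : ℝ × ℝ => w (fanLine a b νl νr q.2 q.1, q.1)) (Ico 0 T ×ˢ univ) :=
  hw.comp (by unfold fanLine; fun_prop) fun q hq => ⟨mem_univ _, hq.1⟩

theorem continuousOn_fanIntegrand
    (hreg : ContDiffOn ℝ 1 (fun p : ℝ × ℝ => u p.1 p.2) (univ ×ˢ Ico 0 T)) :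
    ContinuousOn (uncurry (fanIntegrand u a b νl νr)) (Ico 0 T ×ˢ univ) :=
  (continuous_const.add (continuous_const.mul continuous_fst)).continuousOn.mul
    (continuousOn_comp_fanLine hreg.continuousOn)

theorem continuousOn_fanIntegrandTimeDeriv
    (hreg : ContDiffOn ℝ 1 (fun p : ℝ × ℝ => u p.1 p.2) (univ ×ˢ Ico 0 T)) :
    ContinuousOn (uncurry (fanIntegrandTimeDeriv u a b νl νr)) (Ico 0 T ×ˢ univ) := by
  have hU := continuousOn_comp_fanLine (a := a) (b := b) (νl := νl) (νr := νr) hreg.continuousOn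
  have hUx := continuousOn_comp_fanLine (a := a) (b := b) (νl := νl) (νr := νr)
    (continuousOn_deriv_space_slice hreg)
  exact (continuousOn_const.mul hU).add ((Continuous.continuousOn (by fun_prop)).mul
    (((Continuous.continuousOn (by fun_prop)).sub hU).mul hUx))

theorem IsClassicalBurgersSolution.hasDerivAt_fanIntegrand (hu : IsClassicalBurgersSolution T u)
    (θ : ℝ) {s : ℝ} (hs : s ∈ Ioo 0 T) :
    HasDerivAt (fanIntegrand u a b νl νr · θ) (fanIntegrandTimeDeriv u a b νl νr s θ) s := by
  have hL : HasDerivAt (fun s => b - a + (νr - νl) * s) (νr - νl) s := by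
    simpa using ((hasDerivAt_id s).const_mul (νr - νl)).const_add (b - a)
  have hline := (hu.hasDerivWithinAt_along_line (a + θ * (b - a)) (νl + θ * (νr - νl))
    (Ioo_subset_Ico_self hs)).hasDerivAt (Ico_mem_nhds hs.1 hs.2)
  exact (hL.mul hline).congr_deriv (by simp only [fanIntegrandTimeDeriv, fanLine])

theorem hasDerivAt_modifiedFlux_fanLine
    (hreg : ContDiffOn ℝ 1 (fun p : ℝ × ℝ => u p.1 p.2) (univ ×ˢ Ico 0 T))
    {s : ℝ} (hs : s ∈ Ico 0 T) (θ : ℝ) :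
    HasDerivAt (fun θ => -modifiedFlux (νl + θ * (νr - νl)) (u (fanLine a b νl νr θ s) s))
      (fanIntegrandTimeDeriv u a b νl νr s θ) θ := by
  have hline : HasDerivAt (fanLine a b νl νr · s) (b - a + (νr - νl) * s) θ := by
    unfold fanLine
    have := ((hasDerivAt_id θ).mul_const (b - a)).const_add a |>.add
      (((hasDerivAt_id θ).mul_const (νr - νl)).const_add νl |>.mul_const s)
    exact this.congr_deriv (by ring)
  have hw := (differentiableAt_space_slice hreg hs _).hasDerivAt.comp θ hline
  have hν : HasDerivAt (fun θ => νl + θ * (νr - νl)) (νr - νl) θ := by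
    simpa using ((hasDerivAt_id θ).mul_const (νr - νl)).const_add νl
  unfold modifiedFlux
  exact (((hw.pow 2).div_const 2).sub (hν.mul hw)).neg.congr_deriv
    (by simp only [fanIntegrandTimeDeriv, Function.comp_def]; ring)

theorem IsClassicalBurgersSolution.hasDerivAt_integral_fanIntegrand
    (hu : IsClassicalBurgersSolution T u)
    (hl : ∀ s ∈ Ico 0 T, u (a + νl * s) s = νl) (hr : ∀ s ∈ Ico 0 T, u (b + νr * s) s = νr)
    {s : ℝ} (hs : s ∈ Ioo 0 T) :
    HasDerivAt (fun s => ∫ θ in (0 : ℝ)..1, fanIntegrand u a b νl νr s θ)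
      (νr ^ 2 / 2 - νl ^ 2 / 2) s := by
  have hsI := Ioo_subset_Ico_self hs
  have hsub : Ioo 0 T ×ˢ univ ⊆ Ico 0 T ×ˢ (univ : Set ℝ) := prod_mono Ioo_subset_Ico_self le_rfl
  have hG' := continuousOn_fanIntegrandTimeDeriv (a := a) (b := b) (νl := νl) (νr := νr) hu.1
  refine (hasDerivAt_intervalIntegral_of_continuousOn_deriv isOpen_Ioo hs
    ((continuousOn_fanIntegrand hu.1).mono hsub) (hG'.mono hsub)
    (fun s hs θ => hu.hasDerivAt_fanIntegrand θ hs) 0 1).congr_deriv ?_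
  rw [integral_eq_sub_of_hasDerivAt (fun θ _ => hasDerivAt_modifiedFlux_fanLine hu.1 hsI θ)
    ((hG'.comp_continuous (Continuous.prodMk_right s) fun θ => ⟨hsI, mem_univ θ⟩).intervalIntegrable
      0 1)]
  simp only [fanLine_zero, fanLine_one, hl s hsI, hr s hsI, modifiedFlux]
  ring

end Fan

theorem stmt12_general (T : ℝ) (u : ℝ → ℝ → ℝ)
    (hreg : ContDiffOn ℝ 1 (fun p : ℝ × ℝ => u p.1 p.2)
      ((Set.univ : Set ℝ) ×ˢ Set.Ico (0 : ℝ) T))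
    (hpde : ∀ x : ℝ, ∀ t ∈ Set.Ico (0 : ℝ) T,
      derivWithin (fun s : ℝ => u x s) (Set.Ico (0 : ℝ) T) t
        + u x t * deriv (fun y : ℝ => u y t) x = 0)
    (a b : ℝ) (νl νr : ℝ) (hνl : νl = u a 0) (hνr : νr = u b 0) :
    ∀ t ∈ Set.Ico (0 : ℝ) T,
      (∫ x in (a + νl * t)..(b + νr * t), u x t)
        = (∫ x in a..b, u x 0) + t * (νr ^ 2 / 2 - νl ^ 2 / 2) := by
  intro t ht
  have hu : IsClassicalBurgersSolution T u := ⟨hreg, hpde⟩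
  have hl : ∀ s ∈ Ico 0 T, u (a + νl * s) s = νl := fun s hs => by
    rw [hνl]; exact hu.apply_along_characteristic a hs
  have hr : ∀ s ∈ Ico 0 T, u (b + νr * s) s = νr := fun s hs => by
    rw [hνr]; exact hu.apply_along_characteristic b hs
  have hmass₀ :=
    integral_eq_integral_fanIntegrand (u := u) (a := a) (b := b) (νl := νl) (νr := νr) 0
  simp only [mul_zero, add_zero] at hmass₀
  have hFTC := integral_eq_sub_of_hasDerivAt_of_le ht.1
    ((continuousOn_intervalIntegral_of_continuousOn_uncurry (continuousOn_fanIntegrand hreg) 0 1)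
      |>.mono (Icc_subset_Ico_right ht.2))
    (fun s hs => hu.hasDerivAt_integral_fanIntegrand hl hr ⟨hs.1, hs.2.trans ht.2⟩)
    intervalIntegrable_const
  rw [intervalIntegral.integral_const, smul_eq_mul, sub_zero] at hFTC
  rw [integral_eq_integral_fanIntegrand, hmass₀]
  linarith

/-- For a C¹ solution of Burgers' equation on ℝ × [0,T), with a ≤ b,
ν_l = u(a,0), ν_r = u(b,0), and non-crossing characteristics a + ν_l t ≤ b + ν_r t on
[0,T), the mass between the two exact characteristics evolves exactly linearly in time:
∫_{a+ν_l t}^{b+ν_r t} u(x,t) dx = ∫_a^b u(x,0) dx + t·(ν_r²/2 − ν_l²/2). -/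
theorem stmt12 (T : ℝ) (hT : 0 < T) (u : ℝ → ℝ → ℝ)
    (hreg : ContDiffOn ℝ 1 (fun p : ℝ × ℝ => u p.1 p.2)
      ((Set.univ : Set ℝ) ×ˢ Set.Ico (0 : ℝ) T))
    (hpde : ∀ x : ℝ, ∀ t ∈ Set.Ico (0 : ℝ) T,
      derivWithin (fun s : ℝ => u x s) (Set.Ico (0 : ℝ) T) t
        + u x t * deriv (fun y : ℝ => u y t) x = 0)
    (a b : ℝ) (hab : a ≤ b) (νl νr : ℝ) (hνl : νl = u a 0) (hνr : νr = u b 0)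
    (hnocross : ∀ t ∈ Set.Ico (0 : ℝ) T, a + νl * t ≤ b + νr * t) :
    ∀ t ∈ Set.Ico (0 : ℝ) T,
      (∫ x in (a + νl * t)..(b + νr * t), u x t)
        = (∫ x in a..b, u x 0) + t * (νr ^ 2 / 2 - νl ^ 2 / 2) :=
  stmt12_general T u hreg hpde a b νl νr hνl hνr
end
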